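/- Assume: 𝒞 is closed under kernels of admissible epimorphisms in ℰ; (𝒞,𝒞⊥) is a complete cotorsion pair in ℰ with 𝒞⊥ ⊆ 𝒵; 𝒵 ∩ 𝒞 has the 2-out-of-3 property for short exact sequences in 𝒞; 𝒫 ⊆ 𝒞 is a full subcategory closed under extensions and under kernels of admissible epimorphisms in 𝒞; (𝒫,𝒫⊥) is a complete cotorsion pair in the exact category 𝒫 (orthogonality with respect to short exact sequences in 𝒫) with 𝒫⊥ ⊆ 𝒵; and every object of 𝒞 admits a finite 𝒫-resolution, i.e. an exact sequence 0 → P_n → ⋯ → P_1 → P_0 → A → 0 in 𝒞 with all P_i ∈ 𝒫. Then every object A of 𝒵 ∩ 𝒞 admits a finite resolution 0 → Z_n → ⋯ → Z_1 → Z_0 → A → 0 whose terms Z_i all lie in 𝒵 ∩ 𝒫 and all of whose intermediate syzygies lie in 𝒵. -/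

import Mathlib

open CategoryTheory CategoryTheory.Limits

universe v u

variable {𝒜 : Type u} [Category.{v} 𝒜] [Abelian 𝒜]

/-- `(f, g)` forms a short exact sequence `0 ⟶ X ⟶ Y ⟶ Z ⟶ 0` in the ambient
abelian category `𝒜`. -/
def IsShortExactSeq {X Y Z : 𝒜} (f : X ⟶ Y) (g : Y ⟶ Z) : Prop :=
  ∃ w : f ≫ g = 0, (ShortComplex.mk f g w).ShortExact

/-- A class of objects is closed under isomorphisms. -/
def IsoClosed (P : 𝒜 → Prop) : Prop := ∀ ⦃X Y : 𝒜⦄, (X ≅ Y) → P X → P Y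

/-- `Ext¹(X, Y) = 0` relative to the exact subcategory determined by `E`:
every short exact sequence `0 ⟶ Y ⟶ M ⟶ X ⟶ 0` in `E` splits. -/
def Ext1IsZero (E : 𝒜 → Prop) (X Y : 𝒜) : Prop :=
  ∀ ⦃M : 𝒜⦄ (f : Y ⟶ M) (g : M ⟶ X), E M → IsShortExactSeq f g →
    ∃ r : M ⟶ Y, f ≫ r = 𝟙 Y

/-- `(C, I)` is a cotorsion pair in the exact subcategory of `𝒜` determined by
the class of objects `E`: the two classes are each other's orthogonal
complement with respect to `Ext¹`. -/
structure IsCotorsionPair (E C I : 𝒜 → Prop) : Prop where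
  right_eq : ∀ Y, I Y ↔ (E Y ∧ ∀ ⦃X⦄, C X → Ext1IsZero E X Y)
  left_eq : ∀ X, C X ↔ (E X ∧ ∀ ⦃Y⦄, I Y → Ext1IsZero E X Y)

/-- The cotorsion pair `(C, I)` in `E` is complete: every object of `E` admits
both kinds of approximation sequences. -/
def IsCompleteCP (E C I : 𝒜 → Prop) : Prop :=
  (∀ A, E A → ∃ (Y P : 𝒜) (f : A ⟶ Y) (g : Y ⟶ P),
      I Y ∧ C P ∧ IsShortExactSeq f g) ∧
  (∀ A, E A → ∃ (Y P : 𝒜) (f : Y ⟶ P) (g : P ⟶ A),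
      I Y ∧ C P ∧ IsShortExactSeq f g)

/-- The cotorsion pair is hereditary: `C` is closed under kernels of
admissible epimorphisms in `E`. -/
def IsHereditaryCP (E C : 𝒜 → Prop) : Prop :=
  ∀ ⦃X Y Z : 𝒜⦄ (f : X ⟶ Y) (g : Y ⟶ Z),
    IsShortExactSeq f g → E X → C Y → C Z → C X

/-- A cofibration: an admissible monomorphism between objects of `C` whose
cokernel lies in `C`. -/
def IsCofib (C : 𝒜 → Prop) {X Y : 𝒜} (f : X ⟶ Y) : Prop :=
  C X ∧ C Y ∧ ∃ (W : 𝒜) (g : Y ⟶ W), C W ∧ IsShortExactSeq f g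

/-- An acyclic fibration: an admissible epimorphism in `E` whose kernel lies
in `I`. -/
def IsAcyclicFib (E I : 𝒜 → Prop) {Y Z : 𝒜} (g : Y ⟶ Z) : Prop :=
  E Y ∧ E Z ∧ ∃ (K : 𝒜) (k : K ⟶ Y), I K ∧ IsShortExactSeq k g

/-- An acyclic cofibration: an admissible monomorphism between objects of `C`
whose cokernel lies in `C ∩ Z`. -/
def IsAcyclicCofib (C Zc : 𝒜 → Prop) {X Y : 𝒜} (f : X ⟶ Y) : Prop :=
  C X ∧ C Y ∧ ∃ (W : 𝒜) (g : Y ⟶ W), C W ∧ Zc W ∧ IsShortExactSeq f g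

/-- A weak equivalence: a morphism between objects of `C` that factors as an
acyclic cofibration followed by an acyclic fibration. -/
def IsWeakEquiv (E C I Zc : 𝒜 → Prop) {X Y : 𝒜} (f : X ⟶ Y) : Prop :=
  C X ∧ C Y ∧ ∃ (M : 𝒜) (i : X ⟶ M) (p : M ⟶ Y),
    IsAcyclicCofib C Zc i ∧ IsAcyclicFib E I p ∧ i ≫ p = f

/-- The standing setup: a complete hereditary cotorsion pair `(Cc, Ip)` in the
exact subcategory of `𝒜` determined by the isomorphism-closed,
extension-closed class `E`, together with an isomorphism-closed class
`Zc ⊆ E` with `Ip ⊆ Zc`, such that `Zc ∩ Cc` is closed under extensions and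
under cokernels of admissible monomorphisms in `Cc`. -/
structure CotorsionSetup (E Cc Ip Zc : 𝒜 → Prop) : Prop where
  isoE : IsoClosed E
  isoC : IsoClosed Cc
  isoI : IsoClosed Ip
  isoZ : IsoClosed Zc
  extClosedE : ∀ ⦃X Y Z : 𝒜⦄ (f : X ⟶ Y) (g : Y ⟶ Z),
    IsShortExactSeq f g → E X → E Z → E Y
  cp : IsCotorsionPair E Cc Ip
  complete : IsCompleteCP E Cc Ip
  hereditary : IsHereditaryCP E Cc
  zSubE : ∀ ⦃X⦄, Zc X → E X
  iSubZ : ∀ ⦃X⦄, Ip X → Zc X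
  zcExtClosed : ∀ ⦃X Y Z : 𝒜⦄ (f : X ⟶ Y) (g : Y ⟶ Z), IsShortExactSeq f g →
    Cc X → Cc Y → Cc Z → Zc X → Zc Z → Zc Y
  zcCokerClosed : ∀ ⦃X Y Z : 𝒜⦄ (f : X ⟶ Y) (g : Y ⟶ Z), IsShortExactSeq f g →
    Cc X → Cc Y → Cc Z → Zc X → Zc Y → Zc Z

/-- `A` admits a resolution `0 → B_n → ⋯ → B_1 → B_0 → A → 0` of length `n`
whose terms `B_k` satisfy `P` and whose intermediate syzygies satisfy `Q`:
each map `B_k → B_{k-1}` factors as an admissible epimorphism onto a syzygy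
followed by an admissible monomorphism, the syzygies fitting into short exact
sequences `0 → Z_{k+1} → B_k → Z_k → 0`. -/
inductive HasResolution (P Q : 𝒜 → Prop) : ℕ → 𝒜 → Prop
  | base {A B : 𝒜} (f : B ⟶ A) (hB : P B) (hf : IsIso f) :
      HasResolution P Q 0 A
  | step {n : ℕ} {A B K : 𝒜} (k : K ⟶ B) (g : B ⟶ A) (hB : P B) (hK : Q K)
      (hses : IsShortExactSeq k g) (hrec : HasResolution P Q n K) :
      HasResolution P Q (n + 1) A

/-!
Induct along a finite `Pp`-resolution: every `K ∈ Cc` with such a resolution embeds into some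
`K' ∈ Zc ∩ Cc` with cokernel in `Pp`, where `K'` has a resolution by `Zc ∩ Pp` with syzygies in
`Zc`. Given `0 ⟶ L ⟶ B ⟶ K ⟶ 0` and such an embedding `L ⟶ L'`, the pushout `P` of
`B ⟵ L ⟶ L'` lies in `Pp`, being an extension of `B` by `L'/L`; a special `Pperp`-preenvelope
`P ⟶ W` then makes `K' := W/L'` work: `W ∈ Zc ∩ Pp`, `K' ∈ Zc` by 2-out-of-3, and `K'/K ≅ W/P`.
For `A ∈ Zc ∩ Cc` with `0 ⟶ K ⟶ B ⟶ A ⟶ 0`, the same pushout gives `0 ⟶ K' ⟶ P ⟶ A ⟶ 0`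
with `P ∈ Zc` by 2-out-of-3.
-/

namespace IsShortExactSeq

variable {X Y Z : 𝒜} {f : X ⟶ Y} {g : Y ⟶ Z}

lemma w (h : IsShortExactSeq f g) : f ≫ g = 0 := h.1

lemma mono (h : IsShortExactSeq f g) : Mono f := h.2.mono_f

lemma epi (h : IsShortExactSeq f g) : Epi g := h.2.epi_g

lemma of_isColimit (w : f ≫ g = 0) [Mono f] (hc : IsColimit (CokernelCofork.ofπ g w)) :
    IsShortExactSeq f g :=
  ⟨w, .mk' (ShortComplex.exact_of_g_is_cokernel _ hc) ‹_› (epi_of_isColimit_cofork hc)⟩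

lemma of_isLimit (w : f ≫ g = 0) [Epi g] (hl : IsLimit (KernelFork.ofι f w)) :
    IsShortExactSeq f g :=
  ⟨w, .mk' (ShortComplex.exact_of_f_is_kernel _ hl) (mono_of_isLimit_fork hl) ‹_›⟩

end IsShortExactSeq

lemma isShortExactSeq_cokernel {X Y : 𝒜} (f : X ⟶ Y) [Mono f] :
    IsShortExactSeq f (cokernel.π f) :=
  .of_isColimit (cokernel.condition f) (cokernelIsCokernel f)

lemma CategoryTheory.IsPushout.exists_isShortExactSeq {X₁ X₂ X₃ X₄ K : 𝒜} {f : X₁ ⟶ X₂}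
    {g : X₁ ⟶ X₃} {inl : X₂ ⟶ X₄} {inr : X₃ ⟶ X₄} (sq : IsPushout f g inl inr)
    {p : X₂ ⟶ K} (hp : IsShortExactSeq f p) :
    ∃ q : X₄ ⟶ K, inl ≫ q = p ∧ IsShortExactSeq inr q := by
  have hw : f ≫ p = g ≫ 0 := by rw [comp_zero, hp.w]
  have := hp.mono
  have := hp.epi
  have : Mono inr := Abelian.mono_inr_of_isColimit f g sq.isColimit
  have : Epi (sq.desc p 0 hw) := by
    have : Epi (inl ≫ sq.desc p 0 hw) := by rwa [sq.inl_desc]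
    exact epi_of_epi inl _
  refine ⟨sq.desc p 0 hw, sq.inl_desc p 0 hw, .of_isColimit (sq.inr_desc p 0 hw)
    (CokernelCofork.IsColimit.ofπ' _ _ fun t ht => ?_)⟩
  have ht' : f ≫ inl ≫ t = 0 := by rw [sq.w_assoc, ht, comp_zero]
  refine ⟨hp.2.exact.desc _ ht', sq.hom_ext ?_ ?_⟩
  · rw [sq.inl_desc_assoc, hp.2.exact.g_desc]
  · rw [sq.inr_desc_assoc, zero_comp, ht]

lemma CategoryTheory.IsPullback.exists_isShortExactSeq {X₁ X₂ X₃ X₄ K : 𝒜} {fst : X₁ ⟶ X₂}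
    {snd : X₁ ⟶ X₃} {f : X₂ ⟶ X₄} {g : X₃ ⟶ X₄} (sq : IsPullback fst snd f g)
    {k : K ⟶ X₂} (hk : IsShortExactSeq k f) :
    ∃ k' : K ⟶ X₁, k' ≫ fst = k ∧ IsShortExactSeq k' snd := by
  have hw : k ≫ f = 0 ≫ g := by rw [zero_comp, hk.w]
  have := hk.mono
  have := hk.epi
  have : Epi snd := Abelian.epi_snd_of_isLimit f g sq.isLimit
  have : Mono (sq.lift k 0 hw) := by
    have : Mono (sq.lift k 0 hw ≫ fst) := by rwa [sq.lift_fst]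
    exact mono_of_mono _ fst
  refine ⟨sq.lift k 0 hw, sq.lift_fst k 0 hw, .of_isLimit (sq.lift_snd k 0 hw)
    (KernelFork.IsLimit.ofι' _ _ fun t ht => ?_)⟩
  have ht' : (t ≫ fst) ≫ f = 0 := by rw [Category.assoc, sq.w, reassoc_of% ht, zero_comp]
  refine ⟨hk.2.exact.lift _ ht', sq.hom_ext ?_ ?_⟩
  · rw [Category.assoc, sq.lift_fst, hk.2.exact.lift_f]
  · rw [Category.assoc, sq.lift_snd, comp_zero, ht]

lemma CategoryTheory.IsPullback.isShortExactSeq_fst_comp {I M Y X Z P : 𝒜} {ι : I ⟶ M}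
    {π : M ⟶ Y} {f : X ⟶ Y} {g : Y ⟶ Z} {fst : P ⟶ M} {snd : P ⟶ X} (sq : IsPullback fst snd π f)
    (hιπ : IsShortExactSeq ι π) (hfg : IsShortExactSeq f g) :
    IsShortExactSeq fst (π ≫ g) := by
  have := hfg.mono
  have := hιπ.epi
  have := hfg.epi
  have : Mono fst := sq.mono_fst_of_mono
  have hw : fst ≫ π ≫ g = 0 := by rw [sq.w_assoc, hfg.w, comp_zero]
  refine .of_isLimit hw (KernelFork.IsLimit.ofι' _ _ fun t ht => ?_)
  have ht' : (t ≫ π) ≫ g = 0 := by rwa [Category.assoc]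
  exact ⟨sq.lift t _ (hfg.2.exact.lift_f _ ht').symm, sq.lift_fst _ _ _⟩

lemma IsCotorsionPair.left_of_isShortExactSeq {E C I : 𝒜 → Prop}
    (hEext : ∀ ⦃X Y Z : 𝒜⦄ (f : X ⟶ Y) (g : Y ⟶ Z),
      IsShortExactSeq f g → E X → E Z → E Y)
    (hCP : IsCotorsionPair E C I) {X Y Z : 𝒜} {f : X ⟶ Y} {g : Y ⟶ Z}
    (hfg : IsShortExactSeq f g) (hX : C X) (hZ : C Z) : C Y := by
  obtain ⟨hEX, hXI⟩ := (hCP.left_eq X).mp hX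
  obtain ⟨hEZ, hZI⟩ := (hCP.left_eq Z).mp hZ
  refine (hCP.left_eq Y).mpr ⟨hEext f g hfg hEX hEZ, fun J hJ M ι π _ hιπ => ?_⟩
  have hEJ : E J := ((hCP.right_eq J).mp hJ).1
  -- `Ext¹(X, J) = 0` splits the pullback of `π` along `f`; pushing the sequence
  -- `0 ⟶ pullback π f ⟶ M ⟶ Z ⟶ 0` out along that retraction gives an extension of `Z` by `J`,
  -- whose splitting yields the retraction of `ι`.
  have sq := IsPullback.of_hasPullback π f
  obtain ⟨k, hk, hkses⟩ := sq.exists_isShortExactSeq hιπ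
  obtain ⟨ρ, hρ⟩ := hXI hJ k _ (hEext _ _ hkses hEJ hEX) hkses
  have sq' := IsPushout.of_hasPushout (pullback.fst π f) ρ
  obtain ⟨q, -, hq⟩ := sq'.exists_isShortExactSeq (sq.isShortExactSeq_fst_comp hιπ hfg)
  obtain ⟨r, hr⟩ := hZI hJ _ q (hEext _ _ hq hEJ hEZ) hq
  refine ⟨pushout.inl _ _ ≫ r, ?_⟩
  calc ι ≫ pushout.inl _ _ ≫ r = k ≫ pullback.fst π f ≫ pushout.inl _ _ ≫ r := by
        rw [reassoc_of% hk]
    _ = k ≫ ρ ≫ pushout.inr _ _ ≫ r := by rw [pushout.condition_assoc]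
    _ = 𝟙 J := by rw [hr, Category.comp_id, hρ]

lemma IsShortExactSeq.exists_isShortExactSeq_of_comp {A B C Y₁ Y₂ Y₃ : 𝒜} {a : A ⟶ B}
    {p₁ : B ⟶ Y₁} {b : B ⟶ C} {p₂ : C ⟶ Y₂} {p₃ : C ⟶ Y₃} (h₁ : IsShortExactSeq a p₁)
    (h₂ : IsShortExactSeq b p₂) (h₃ : IsShortExactSeq (a ≫ b) p₃) :
    ∃ (φ : Y₁ ⟶ Y₃) (ψ : Y₃ ⟶ Y₂), IsShortExactSeq φ ψ := by
  have := h₁.epi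
  have := h₃.epi
  have hφ : a ≫ b ≫ p₃ = 0 := by rw [← Category.assoc, h₃.w]
  set φ := h₁.2.exact.desc _ hφ
  have hw : b ≫ p₃ = p₁ ≫ φ := (h₁.2.exact.g_desc _ hφ).symm
  have hs (s : PushoutCocone b p₁) : (a ≫ b) ≫ s.inl = 0 := by
    rw [Category.assoc, s.condition, reassoc_of% h₁.w, zero_comp]
  have sq : IsPushout b p₁ p₃ φ := .of_isColimit <| PushoutCocone.IsColimit.mk hw
    (fun s => h₃.2.exact.desc _ (hs s)) (fun s => h₃.2.exact.g_desc _ (hs s))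
    (fun s => by rw [← cancel_epi p₁, ← reassoc_of% hw, h₃.2.exact.g_desc, s.condition])
    (fun s m hm _ => by rw [← cancel_epi p₃, hm, h₃.2.exact.g_desc])
  obtain ⟨ψ, -, hψ⟩ := sq.exists_isShortExactSeq h₂
  exact ⟨φ, ψ, hψ⟩

section Resolution

variable {Cc Zc Pp : 𝒜 → Prop}

lemma exists_pushout_isShortExactSeq_mem
    (hCext : ∀ ⦃X Y Z : 𝒜⦄ (f : X ⟶ Y) (g : Y ⟶ Z), IsShortExactSeq f g →
      Cc X → Cc Z → Cc Y)
    (hPsubC : ∀ ⦃X⦄, Pp X → Cc X)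
    (hPext : ∀ ⦃X Y Z : 𝒜⦄ (f : X ⟶ Y) (g : Y ⟶ Z), IsShortExactSeq f g →
      Pp X → Cc Y → Pp Z → Pp Y)
    {K B A K' Q : 𝒜} {k : K ⟶ B} {g : B ⟶ A} {j : K ⟶ K'} {c : K' ⟶ Q}
    (hkg : IsShortExactSeq k g) (hB : Pp B) (hjc : IsShortExactSeq j c) (hQ : Pp Q) :
    ∃ (P : 𝒜) (i : K' ⟶ P) (p : P ⟶ A), IsShortExactSeq i p ∧ Pp P := by
  have sq := IsPushout.of_hasPushout k j
  obtain ⟨p, -, hip⟩ := sq.exists_isShortExactSeq hkg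
  obtain ⟨d, -, hd⟩ := sq.flip.exists_isShortExactSeq hjc
  exact ⟨_, _, p, hip, hPext _ d hd hB (hCext _ d hd (hPsubC hB) (hPsubC hQ)) hQ⟩

lemma exists_isShortExactSeq_acyclic_of_hasResolution
    (hCext : ∀ ⦃X Y Z : 𝒜⦄ (f : X ⟶ Y) (g : Y ⟶ Z), IsShortExactSeq f g →
      Cc X → Cc Z → Cc Y)
    (hZcoker : ∀ ⦃X Y Z : 𝒜⦄ (f : X ⟶ Y) (g : Y ⟶ Z), IsShortExactSeq f g →
      Cc X → Cc Y → Cc Z → Zc X → Zc Y → Zc Z)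
    (hPiso : IsoClosed Pp) (hPsubC : ∀ ⦃X⦄, Pp X → Cc X)
    (hPext : ∀ ⦃X Y Z : 𝒜⦄ (f : X ⟶ Y) (g : Y ⟶ Z), IsShortExactSeq f g →
      Pp X → Cc Y → Pp Z → Pp Y)
    (hPenv : ∀ A, Pp A → ∃ (W Q : 𝒜) (j : A ⟶ W) (c : W ⟶ Q),
      IsShortExactSeq j c ∧ Zc W ∧ Pp W ∧ Pp Q)
    {n : ℕ} {K : 𝒜} (hK : HasResolution Pp Cc n K) (hCK : Cc K) :
    ∃ (K' Q : 𝒜) (j : K ⟶ K') (c : K' ⟶ Q), IsShortExactSeq j c ∧ Pp Q ∧ Zc K' ∧ Cc K' ∧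
      ∃ m, HasResolution (fun X => Zc X ∧ Pp X) Zc m K' := by
  induction hK with
  | base f hB _ =>
    obtain ⟨W, Q, j, c, hjc, hZW, hPW, hQ⟩ := hPenv _ (hPiso (asIso f) hB)
    exact ⟨W, Q, j, c, hjc, hQ, hZW, hPsubC hPW, 0, .base (𝟙 W) ⟨hZW, hPW⟩ inferInstance⟩
  | step l g hB hL hlg _ ih =>
    obtain ⟨L', _, j, c, hjc, hQL, hZL', hCL', m, hresL'⟩ := ih hL
    obtain ⟨P, i, p, hip, hP⟩ :=
      exists_pushout_isShortExactSeq_mem hCext hPsubC hPext hlg hB hjc hQL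
    obtain ⟨W, Q, e, d, hed, hZW, hPW, hQ⟩ := hPenv P hP
    have := hip.mono
    have := hed.mono
    have hK' := isShortExactSeq_cokernel (i ≫ e)
    obtain ⟨φ, ψ, hφψ⟩ := hip.exists_isShortExactSeq_of_comp hed hK'
    have hCK' := hCext φ ψ hφψ hCK (hPsubC hQ)
    exact ⟨_, Q, φ, ψ, hφψ, hQ, hZcoker _ _ hK' hCL' (hPsubC hPW) hCK' hZL' hZW, hCK', m + 1,
      .step _ _ ⟨hZW, hPW⟩ hZL' hK' hresL'⟩

lemma exists_hasResolution_acyclic_of_hasResolution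
    (hCext : ∀ ⦃X Y Z : 𝒜⦄ (f : X ⟶ Y) (g : Y ⟶ Z), IsShortExactSeq f g →
      Cc X → Cc Z → Cc Y)
    (hZext : ∀ ⦃X Y Z : 𝒜⦄ (f : X ⟶ Y) (g : Y ⟶ Z), IsShortExactSeq f g →
      Cc X → Cc Y → Cc Z → Zc X → Zc Z → Zc Y)
    (hZcoker : ∀ ⦃X Y Z : 𝒜⦄ (f : X ⟶ Y) (g : Y ⟶ Z), IsShortExactSeq f g →
      Cc X → Cc Y → Cc Z → Zc X → Zc Y → Zc Z)
    (hPiso : IsoClosed Pp) (hPsubC : ∀ ⦃X⦄, Pp X → Cc X)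
    (hPext : ∀ ⦃X Y Z : 𝒜⦄ (f : X ⟶ Y) (g : Y ⟶ Z), IsShortExactSeq f g →
      Pp X → Cc Y → Pp Z → Pp Y)
    (hPenv : ∀ A, Pp A → ∃ (W Q : 𝒜) (j : A ⟶ W) (c : W ⟶ Q),
      IsShortExactSeq j c ∧ Zc W ∧ Pp W ∧ Pp Q)
    {n : ℕ} {A : 𝒜} (hA : HasResolution Pp Cc n A) (hZA : Zc A) (hCA : Cc A) :
    ∃ m, HasResolution (fun X => Zc X ∧ Pp X) Zc m A := by
  cases hA with
  | base f hB _ => exact ⟨0, .base (𝟙 A) ⟨hZA, hPiso (asIso f) hB⟩ inferInstance⟩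
  | step k g hB hK hkg hK_res =>
    obtain ⟨K', Q, j, c, hjc, hQ, hZK', hCK', m, hresK'⟩ :=
      exists_isShortExactSeq_acyclic_of_hasResolution hCext hZcoker hPiso hPsubC hPext hPenv
        hK_res hK
    obtain ⟨P, i, p, hip, hP⟩ :=
      exists_pushout_isShortExactSeq_mem hCext hPsubC hPext hkg hB hjc hQ
    exact ⟨m + 1, .step i p ⟨hZext i p hip hCK' (hPsubC hP) hCA hZK' hZA, hP⟩ hZK' hip hresK'⟩

end Resolution

theorem resolution_in_acyclics_general
    (E Cc Ip Zc Pp Pperp : 𝒜 → Prop)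
    (hPiso : IsoClosed Pp)
    (hEext : ∀ ⦃X Y Z : 𝒜⦄ (f : X ⟶ Y) (g : Y ⟶ Z),
      IsShortExactSeq f g → E X → E Z → E Y)
    (hCP : IsCotorsionPair E Cc Ip)
    (hZ23 : ∀ ⦃X Y Z : 𝒜⦄ (f : X ⟶ Y) (g : Y ⟶ Z), IsShortExactSeq f g →
      Cc X → Cc Y → Cc Z →
      ((Zc X → Zc Y → Zc Z) ∧ (Zc X → Zc Z → Zc Y) ∧ (Zc Y → Zc Z → Zc X)))
    (hPsubC : ∀ ⦃X⦄, Pp X → Cc X)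
    (hPext : ∀ ⦃X Y Z : 𝒜⦄ (f : X ⟶ Y) (g : Y ⟶ Z), IsShortExactSeq f g →
      Pp X → Cc Y → Pp Z → Pp Y)
    (hPcp : IsCotorsionPair Pp Pp Pperp)
    (hPcomplete : IsCompleteCP Pp Pp Pperp)
    (hPperpZ : ∀ ⦃X⦄, Pperp X → Zc X)
    (hres : ∀ A, Cc A → ∃ n, HasResolution Pp Cc n A) :
    ∀ A, Zc A → Cc A →
      ∃ n, HasResolution (fun X => Zc X ∧ Pp X) Zc n A := by
  intro A hZA hCA
  have hPenv (B : 𝒜) (hB : Pp B) : ∃ (W Q : 𝒜) (j : B ⟶ W) (c : W ⟶ Q),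
      IsShortExactSeq j c ∧ Zc W ∧ Pp W ∧ Pp Q := by
    obtain ⟨W, Q, j, c, hW, hQ, hjc⟩ := hPcomplete.1 B hB
    exact ⟨W, Q, j, c, hjc, hPperpZ hW, ((hPcp.right_eq W).mp hW).1, hQ⟩
  obtain ⟨n, hA⟩ := hres A hCA
  exact exists_hasResolution_acyclic_of_hasResolution
    (fun _ _ _ _ _ => hCP.left_of_isShortExactSeq hEext)
    (fun _ _ _ f g h hX hY hZ => (hZ23 f g h hX hY hZ).2.1)
    (fun _ _ _ f g h hX hY hZ => (hZ23 f g h hX hY hZ).1)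
    hPiso hPsubC hPext hPenv hA hZA hCA

/-- Assume `Cc` is closed under kernels of admissible
epimorphisms in `E`; `(Cc, Ip)` is a complete cotorsion pair in `E` with
`Ip ⊆ Zc`; `Zc ∩ Cc` has 2-out-of-3 for short exact sequences in `Cc`;
`Pp ⊆ Cc` is closed under extensions and under kernels of admissible
epimorphisms in `Cc`; `(Pp, Pperp)` is a complete cotorsion pair in the exact
category `Pp` with `Pperp ⊆ Zc`; and every object of `Cc` admits a finite
`Pp`-resolution.  Then every object of `Zc ∩ Cc` admits a finite resolution
with terms in `Zc ∩ Pp` and syzygies in `Zc`. -/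
theorem resolution_in_acyclics
    (E Cc Ip Zc Pp Pperp : 𝒜 → Prop)
    (hEiso : IsoClosed E) (hCiso : IsoClosed Cc) (hIiso : IsoClosed Ip)
    (hZiso : IsoClosed Zc) (hPiso : IsoClosed Pp) (hPperpiso : IsoClosed Pperp)
    (hEext : ∀ ⦃X Y Z : 𝒜⦄ (f : X ⟶ Y) (g : Y ⟶ Z),
      IsShortExactSeq f g → E X → E Z → E Y)
    (hZsubE : ∀ ⦃X⦄, Zc X → E X)
    (hCker : IsHereditaryCP E Cc)
    (hCP : IsCotorsionPair E Cc Ip) (hcomplete : IsCompleteCP E Cc Ip)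
    (hIsubZ : ∀ ⦃X⦄, Ip X → Zc X)
    (hZ23 : ∀ ⦃X Y Z : 𝒜⦄ (f : X ⟶ Y) (g : Y ⟶ Z), IsShortExactSeq f g →
      Cc X → Cc Y → Cc Z →
      ((Zc X → Zc Y → Zc Z) ∧ (Zc X → Zc Z → Zc Y) ∧ (Zc Y → Zc Z → Zc X)))
    (hPsubC : ∀ ⦃X⦄, Pp X → Cc X)
    (hPext : ∀ ⦃X Y Z : 𝒜⦄ (f : X ⟶ Y) (g : Y ⟶ Z), IsShortExactSeq f g →
      Pp X → Cc Y → Pp Z → Pp Y)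
    (hPker : ∀ ⦃X Y Z : 𝒜⦄ (f : X ⟶ Y) (g : Y ⟶ Z), IsShortExactSeq f g →
      Cc X → Pp Y → Pp Z → Pp X)
    (hPcp : IsCotorsionPair Pp Pp Pperp)
    (hPcomplete : IsCompleteCP Pp Pp Pperp)
    (hPperpZ : ∀ ⦃X⦄, Pperp X → Zc X)
    (hres : ∀ A, Cc A → ∃ n, HasResolution Pp Cc n A) :
    ∀ A, Zc A → Cc A →
      ∃ n, HasResolution (fun X => Zc X ∧ Pp X) Zc n A :=
  resolution_in_acyclics_general E Cc Ip Zc Pp Pperp hPiso hEext hCP hZ23 hPsubC hPext hPcp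
    hPcomplete hPperpZ hres
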